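/- Fix m ≥ 2 mean times between false alarms 1 ≤ τ_1 < ⋯ < τ_m, c_F > 0, and a single attacker type with payoffs 0 < I_1 < I_2 < ⋯ < I_m. For i ∈ {1,…,m−1} define Q(i) = 1 − Σ_{l=i+1}^m (c_F/I_l)·(1/τ_{l−1} − 1/τ_l), and define the strategies p*(i) by p*(i)_i = 1 − I_i/I_{i+1}, p*(i)_j = I_i/I_j − I_i/I_{j+1} for i < j < m, p*(i)_m = I_i/I_m, p*(i)_j = 0 for j < i, and q*(i) by q*(i)_j = (c_F/I_j)·(1/τ_{j−1} − 1/τ_j) for j > i, q*(i)_i = Q(i), q*(i)_j = 0 for j < i. Then the following are equivalent: (a) (c_F/I_m)·(1/τ_{m−1} − 1/τ_m) ≤ 1; (b) there exists a smallest index i* ∈ {1,…,m−1} with Q(i*) ∈ [0,1), and for this i* the pair (p*(i*), q*(i*)) is a mixed-strategy Nash equilibrium of the matrix game (Ω, Υ) — i.e., p*(i*)ᵀΩq*(i*) ≤ pᵀΩq*(i*) for every probability vector p and p*(i*)ᵀΥq*(i*) ≥ p*(i*)ᵀΥq for every probability vector q — and p*(i*) is a moving target defense (all its entries are strictly less than 1).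 -/
import Mathlib


open Matrix BigOperators

/-- A (mixed strategy) probability vector: nonnegative entries summing to one. -/
def IsProbVec {m : ℕ} (p : Fin m → ℝ) : Prop := (∀ i, 0 ≤ p i) ∧ ∑ i, p i = 1

/-- The previous index `j - 1` (mapping `0` to `0`). -/
def prevF {m : ℕ} (j : Fin m) : Fin m := ⟨(j : ℕ) - 1, lt_of_le_of_lt (Nat.sub_le _ _) j.isLt⟩

/-- Defender cost matrix for a single attacker type: `Ω_{i,j} = c_F/τ_i + 1{j ≤ i}·I_j`. -/
noncomputable def OmegaS {m : ℕ} (τ : Fin m → ℝ) (cF : ℝ) (I : Fin m → ℝ) :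
    Matrix (Fin m) (Fin m) ℝ :=
  Matrix.of fun i j => cF / τ i + if j ≤ i then I j else 0

/-- Attacker payoff matrix for a single attacker type: `Υ_{i,j} = 1{j ≤ i}·I_j`. -/
noncomputable def UpsilonS {m : ℕ} (I : Fin m → ℝ) : Matrix (Fin m) (Fin m) ℝ :=
  Matrix.of fun i j => if j ≤ i then I j else 0

/-- The closed-form attacker mixed strategy of the paper's Lemma 4 (Equation (16)):
`q_j = (c_F/I_j)(1/τ_{j-1} - 1/τ_j)` for `j > i`, `q_i = 1 - Σ_{l > i} q_l`, `q_j = 0` for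
`j < i`. -/
noncomputable def qstar {m : ℕ} (τ : Fin m → ℝ) (I : Fin m → ℝ) (cF : ℝ) (i : Fin m) :
    Fin m → ℝ := fun j =>
  if j < i then 0
  else if j = i then 1 - ∑ l ∈ Finset.Ioi i, cF / I l * (1 / τ (prevF l) - 1 / τ l)
  else cF / I j * (1 / τ (prevF j) - 1 / τ j)

/-- The probability mass `Q(i) = 1 - Σ_{l>i} (c_F/I_l)(1/τ_{l-1} - 1/τ_l)` that the closed-form
attacker equilibrium strategy places on index `i`. -/
noncomputable def Qmass {m : ℕ} (τ : Fin m → ℝ) (I : Fin m → ℝ) (cF : ℝ) (i : Fin m) : ℝ :=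
  1 - ∑ l ∈ Finset.Ioi i, cF / I l * (1 / τ (prevF l) - 1 / τ l)

/-- The closed-form defender mixed strategy of the paper's Theorem 2:
`p_i = 1 - I_i/I_{i+1}`, `p_j = I_i/I_j - I_i/I_{j+1}` for `i < j < m`, `p_m = I_i/I_m`, and
`p_j = 0` for `j < i`. -/
noncomputable def pstar {m : ℕ} (I : Fin m → ℝ) (i : Fin m) : Fin m → ℝ := fun j =>
  if j < i then 0
  else if h : (j : ℕ) + 1 < m then
    (if j = i then 1 - I i / I ⟨(j : ℕ) + 1, h⟩ else I i / I j - I i / I ⟨(j : ℕ) + 1, h⟩)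
  else I i / I j

lemma finIci_singleton {m : ℕ} (k : Fin m) (hk : (k:ℕ) = m - 1) : Finset.Ici k = {k} := by
  ext j
  have := j.isLt
  simp only [Finset.mem_Ici, Finset.mem_singleton, Fin.le_def, Fin.ext_iff]
  omega

lemma finIci_insert {m : ℕ} (k : Fin m) (h : (k:ℕ) + 1 < m) :
    Finset.Ici k = insert k (Finset.Ici ⟨(k:ℕ)+1, h⟩) := by
  ext j
  simp only [Finset.mem_Ici, Finset.mem_insert, Fin.le_def, Fin.ext_iff]
  omega

lemma finIcc_insert {m : ℕ} (i k : Fin m) (h : (i:ℕ) < (k:ℕ)) :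
    Finset.Icc i k = insert k (Finset.Icc i (prevF k)) := by
  ext j
  simp only [Finset.mem_Icc, Finset.mem_insert, Fin.le_def, Fin.ext_iff, prevF]
  omega

lemma not_mem_Ici_succ {m : ℕ} (k : Fin m) (h : (k:ℕ) + 1 < m) :
    k ∉ Finset.Ici (⟨(k:ℕ)+1, h⟩ : Fin m) := by
  simp [Finset.mem_Ici, Fin.le_def]

lemma not_mem_Icc_prev {m : ℕ} (i k : Fin m) (hk : (k:ℕ) ≠ 0) :
    k ∉ Finset.Icc i (prevF k) := by
  simp only [Finset.mem_Icc, Fin.le_def, prevF, not_and]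
  intro _; omega

lemma finIoi_prev {m : ℕ} (i : Fin m) (h : (i:ℕ) ≠ 0) :
    Finset.Ioi (prevF i) = insert i (Finset.Ioi i) := by
  ext j
  simp only [Finset.mem_Ioi, Finset.mem_insert, Fin.lt_def, Fin.ext_iff, prevF]
  omega

lemma pstar_tail_sum {m : ℕ} (I : Fin m → ℝ) (hIpos : ∀ j, 0 < I j) (i k : Fin m)
    (hik : i ≤ k) : ∑ j ∈ Finset.Ici k, pstar I i j = I i / I k := by
  obtain ⟨n, hn⟩ : ∃ n, m - 1 - (k:ℕ) = n := ⟨_, rfl⟩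
  induction n generalizing k with
  | zero =>
    have hk : (k:ℕ) = m - 1 := by have := k.isLt; omega
    rw [finIci_singleton k hk, Finset.sum_singleton]
    have h2 : ¬ ((k:ℕ)+1 < m) := by omega
    simp only [pstar, if_neg (not_lt.2 hik), dif_neg h2]
  | succ n ih =>
    have hk : (k:ℕ)+1 < m := by have := k.isLt; omega
    rw [finIci_insert k hk, Finset.sum_insert (not_mem_Ici_succ k hk)]
    have hik' : i ≤ (⟨(k:ℕ)+1, hk⟩ : Fin m) := le_trans hik (by simp [Fin.le_def])
    rw [ih ⟨(k:ℕ)+1, hk⟩ hik' (by show m - 1 - ((k:ℕ)+1) = n; omega)]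
    simp only [pstar, if_neg (not_lt.2 hik), dif_pos hk]
    by_cases hki : k = i
    · rw [if_pos hki]
      have h3 : I i / I k = 1 := by rw [hki, div_self (hIpos i).ne']
      rw [h3]; ring
    · rw [if_neg hki]
      ring

lemma qstar_partial_sum {m : ℕ} (τ : Fin m → ℝ) (I : Fin m → ℝ) (cF : ℝ)
    (hIpos : ∀ j, 0 < I j) (i k : Fin m) (hik : i ≤ k) :
    ∑ j ∈ Finset.Icc i k, I j * qstar τ I cF i j
      = I i * Qmass τ I cF i + cF / τ i - cF / τ k := by
  obtain ⟨n, hn⟩ : ∃ n, (k:ℕ) - (i:ℕ) = n := ⟨_, rfl⟩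
  induction n generalizing k with
  | zero =>
    have hk : k = i := by
      have := hik; rw [Fin.le_def] at this; exact Fin.ext (by omega)
    subst hk
    rw [Finset.Icc_self, Finset.sum_singleton]
    have h1 : qstar τ I cF k k = Qmass τ I cF k := by
      simp only [qstar, Qmass, if_neg (lt_irrefl k), if_pos rfl, if_true]
    rw [h1]; ring
  | succ n ih =>
    have hik2 : (i:ℕ) < (k:ℕ) := by omega
    have hk0 : (k:ℕ) ≠ 0 := by omega
    rw [finIcc_insert i k hik2, Finset.sum_insert (not_mem_Icc_prev i k hk0)]
    have hikp : i ≤ prevF k := by simp only [Fin.le_def, prevF]; omega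
    rw [ih (prevF k) hikp (by simp only [prevF]; omega)]
    have hlt : ¬ k < i := not_lt.2 hik
    have hne : k ≠ i := by intro h; rw [h] at hik2; omega
    simp only [qstar, if_neg hlt, if_neg hne]
    have h2 : I k * (cF / I k * (1 / τ (prevF k) - 1 / τ k))
        = cF * (1 / τ (prevF k) - 1 / τ k) := by
      rw [div_mul_eq_mul_div, ← mul_div_assoc, mul_comm (I k), mul_div_assoc,
        div_self (hIpos k).ne', mul_one]
    rw [h2]; ring

lemma finIci_eq_insert_Ioi {m : ℕ} (i : Fin m) :
    Finset.Ici i = insert i (Finset.Ioi i) := by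
  ext j
  simp only [Finset.mem_Ici, Finset.mem_insert, Finset.mem_Ioi, Fin.le_def, Fin.lt_def,
    Fin.ext_iff]
  omega

lemma pstar_zero_of_lt {m : ℕ} (I : Fin m → ℝ) {i j : Fin m} (h : j < i) :
    pstar I i j = 0 := by simp [pstar, if_pos h]

lemma qstar_zero_of_lt {m : ℕ} (τ I : Fin m → ℝ) (cF : ℝ) {i j : Fin m} (h : j < i) :
    qstar τ I cF i j = 0 := by simp [qstar, if_pos h]

lemma pstar_nonneg {m : ℕ} (I : Fin m → ℝ) (hIpos : ∀ j, 0 < I j) (hImono : StrictMono I)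
    (i j : Fin m) : 0 ≤ pstar I i j := by
  unfold pstar
  by_cases h1 : j < i
  · simp [h1]
  rw [if_neg h1]
  have hij : i ≤ j := not_lt.1 h1
  by_cases h2 : (j:ℕ) + 1 < m
  · rw [dif_pos h2]
    have hle : I i ≤ I ⟨(j:ℕ)+1, h2⟩ := by
      apply hImono.monotone
      rw [Fin.le_def]; simp; omega
    by_cases h3 : j = i
    · rw [if_pos h3]
      have := div_le_one_of_le₀ hle (le_of_lt (hIpos _))
      linarith
    · rw [if_neg h3]
      rw [sub_nonneg]
      have hj1 : I j ≤ I ⟨(j:ℕ)+1, h2⟩ := by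
        apply hImono.monotone; rw [Fin.le_def]; simp
      exact div_le_div_of_nonneg_left (le_of_lt (hIpos i)) (hIpos j) hj1
  · rw [dif_neg h2]
    exact div_nonneg (hIpos i).le (hIpos j).le

lemma pstar_colsum {m : ℕ} (I : Fin m → ℝ) (hIpos : ∀ j, 0 < I j) (i j : Fin m) :
    ∑ k ∈ Finset.Ici j, pstar I i k = if i ≤ j then I i / I j else 1 := by
  by_cases h : i ≤ j
  · rw [if_pos h, pstar_tail_sum I hIpos i j h]
  · rw [if_neg h]
    have hsub : Finset.Ici i ⊆ Finset.Ici j :=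
      Finset.Ici_subset_Ici.2 (le_of_lt (not_le.1 h))
    rw [← Finset.sum_subset hsub (fun x _ hx => by
      refine pstar_zero_of_lt I (not_le.1 ?_)
      simpa [Finset.mem_Ici] using hx)]
    rw [pstar_tail_sum I hIpos i i le_rfl, div_self (hIpos i).ne']

lemma pstar_probvec {m : ℕ} (I : Fin m → ℝ) (hIpos : ∀ j, 0 < I j) (hImono : StrictMono I)
    (i : Fin m) : IsProbVec (pstar I i) := by
  refine ⟨pstar_nonneg I hIpos hImono i, ?_⟩
  have h1 := pstar_tail_sum I hIpos i i le_rfl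
  rw [div_self (hIpos i).ne'] at h1
  refine Eq.trans ?_ h1
  exact (Finset.sum_subset (Finset.subset_univ (Finset.Ici i)) (fun x _ hx =>
    pstar_zero_of_lt I (by simpa [Finset.mem_Ici, not_le] using hx))).symm

lemma rterm_nonneg {m : ℕ} (τ I : Fin m → ℝ) (cF : ℝ) (hcF : 0 ≤ cF)
    (hτpos : ∀ j, 0 < τ j) (hτmono : Monotone τ) (hIpos : ∀ j, 0 < I j) (l : Fin m) :
    0 ≤ cF / I l * (1 / τ (prevF l) - 1 / τ l) := by
  apply mul_nonneg (div_nonneg hcF (hIpos l).le)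
  rw [sub_nonneg]
  apply one_div_le_one_div_of_le (hτpos _)
  exact hτmono (by rw [Fin.le_def]; exact Nat.sub_le _ _)

lemma rterm_pos {m : ℕ} (τ I : Fin m → ℝ) (cF : ℝ) (hcF : 0 < cF)
    (hτpos : ∀ j, 0 < τ j) (hτmono : StrictMono τ) (hIpos : ∀ j, 0 < I j) (l : Fin m)
    (hl : (l:ℕ) ≠ 0) : 0 < cF / I l * (1 / τ (prevF l) - 1 / τ l) := by
  apply mul_pos (div_pos hcF (hIpos l))
  rw [sub_pos]
  apply one_div_lt_one_div_of_lt (hτpos _)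
  apply hτmono
  rw [Fin.lt_def]
  show (l:ℕ) - 1 < l
  omega

lemma Qmass_prev {m : ℕ} (τ I : Fin m → ℝ) (cF : ℝ) (i : Fin m) (hi : (i:ℕ) ≠ 0) :
    Qmass τ I cF (prevF i)
      = Qmass τ I cF i - cF / I i * (1 / τ (prevF i) - 1 / τ i) := by
  unfold Qmass
  rw [finIoi_prev i hi, Finset.sum_insert (by simp)]
  ring

lemma qstar_nonneg {m : ℕ} (τ I : Fin m → ℝ) (cF : ℝ) (hcF : 0 ≤ cF)
    (hτpos : ∀ j, 0 < τ j) (hτmono : Monotone τ) (hIpos : ∀ j, 0 < I j) (i : Fin m)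
    (hQ0 : 0 ≤ Qmass τ I cF i) (j : Fin m) : 0 ≤ qstar τ I cF i j := by
  unfold qstar
  by_cases h1 : j < i
  · simp [h1]
  rw [if_neg h1]
  by_cases h2 : j = i
  · rw [if_pos h2]
    exact hQ0
  · rw [if_neg h2]
    exact rterm_nonneg τ I cF hcF hτpos hτmono hIpos j

lemma qstar_at_self {m : ℕ} (τ I : Fin m → ℝ) (cF : ℝ) (i : Fin m) :
    qstar τ I cF i i = Qmass τ I cF i := by
  simp only [qstar, Qmass, if_neg (lt_irrefl i), if_pos rfl, if_true]

lemma qstar_sum_one {m : ℕ} (τ I : Fin m → ℝ) (cF : ℝ) (i : Fin m) :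
    ∑ j, qstar τ I cF i j = 1 := by
  rw [← Finset.sum_subset (Finset.subset_univ (Finset.Ici i)) (fun x _ hx =>
    qstar_zero_of_lt τ I cF (by simpa [Finset.mem_Ici, not_le] using hx))]
  rw [finIci_eq_insert_Ioi, Finset.sum_insert (by simp), qstar_at_self]
  have h : ∑ l ∈ Finset.Ioi i, qstar τ I cF i l
      = ∑ l ∈ Finset.Ioi i, cF / I l * (1 / τ (prevF l) - 1 / τ l) := by
    refine Finset.sum_congr rfl fun l hl => ?_
    rw [Finset.mem_Ioi] at hl
    simp [qstar, not_lt.2 hl.le, (ne_of_gt hl)]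
  rw [h, Qmass]
  ring

lemma omega_mulVec_apply {m : ℕ} (τ I : Fin m → ℝ) (cF : ℝ) (i k : Fin m) :
    (OmegaS τ cF I *ᵥ qstar τ I cF i) k
      = cF / τ k + ∑ j ∈ Finset.Iic k, I j * qstar τ I cF i j := by
  have hfil : Finset.Iic k = Finset.univ.filter (· ≤ k) := by ext x; simp
  simp only [Matrix.mulVec, dotProduct, OmegaS, Matrix.of_apply]
  simp_rw [add_mul, ite_mul, zero_mul]
  rw [Finset.sum_add_distrib, ← Finset.mul_sum, qstar_sum_one, mul_one, hfil,
    Finset.sum_filter]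

lemma omega_mulVec_low {m : ℕ} (τ I : Fin m → ℝ) (cF : ℝ) (i k : Fin m) (hk : k < i) :
    (OmegaS τ cF I *ᵥ qstar τ I cF i) k = cF / τ k := by
  rw [omega_mulVec_apply]
  rw [Finset.sum_eq_zero fun x hx => by
    rw [qstar_zero_of_lt τ I cF (lt_of_le_of_lt (Finset.mem_Iic.1 hx) hk), mul_zero]]
  ring

lemma omega_mulVec_high {m : ℕ} (τ I : Fin m → ℝ) (cF : ℝ) (hIpos : ∀ j, 0 < I j)
    (i k : Fin m) (hik : i ≤ k) :
    (OmegaS τ cF I *ᵥ qstar τ I cF i) k = I i * Qmass τ I cF i + cF / τ i := by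
  rw [omega_mulVec_apply]
  rw [← Finset.sum_subset (Finset.Icc_subset_Iic_self) (fun x hx hx2 => by
    rw [Finset.mem_Iic] at hx
    rw [Finset.mem_Icc, not_and] at hx2
    rw [qstar_zero_of_lt τ I cF (not_le.1 fun h => hx2 h hx), mul_zero])]
  rw [qstar_partial_sum τ I cF hIpos i k hik]
  ring

lemma upsilon_dot {m : ℕ} (I : Fin m → ℝ) (i : Fin m) (q : Fin m → ℝ) :
    pstar I i ⬝ᵥ (UpsilonS I *ᵥ q)
      = ∑ j, (∑ k ∈ Finset.Ici j, pstar I i k) * (I j * q j) := by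
  have hfil : ∀ j : Fin m, Finset.Ici j = Finset.univ.filter (fun k => j ≤ k) := by
    intro j; ext x; simp
  simp only [dotProduct, Matrix.mulVec, UpsilonS, Matrix.of_apply]
  simp_rw [ite_mul, zero_mul, Finset.mul_sum, mul_ite, mul_zero]
  rw [Finset.sum_comm]
  refine Finset.sum_congr rfl fun j _ => ?_
  rw [← Finset.sum_filter, ← hfil j, Finset.sum_mul]

lemma upsilon_dot_le {m : ℕ} (I : Fin m → ℝ) (hIpos : ∀ j, 0 < I j)
    (hImono : StrictMono I) (i : Fin m) (q : Fin m → ℝ) (hq : IsProbVec q) :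
    pstar I i ⬝ᵥ (UpsilonS I *ᵥ q) ≤ I i := by
  rw [upsilon_dot]
  have h1 : ∀ j : Fin m, (∑ k ∈ Finset.Ici j, pstar I i k) * (I j * q j) ≤ I i * q j := by
    intro j
    rw [pstar_colsum I hIpos i j]
    by_cases h : i ≤ j
    · rw [if_pos h, ← mul_assoc, div_mul_cancel₀ _ (hIpos j).ne']
    · rw [if_neg h, one_mul]
      exact mul_le_mul_of_nonneg_right (hImono.monotone (not_le.1 h).le) (hq.1 j)
  calc ∑ j, (∑ k ∈ Finset.Ici j, pstar I i k) * (I j * q j)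
      ≤ ∑ j, I i * q j := Finset.sum_le_sum fun j _ => h1 j
    _ = I i := by rw [← Finset.mul_sum, hq.2, mul_one]

lemma upsilon_dot_qstar {m : ℕ} (τ I : Fin m → ℝ) (cF : ℝ) (hIpos : ∀ j, 0 < I j)
    (i : Fin m) : pstar I i ⬝ᵥ (UpsilonS I *ᵥ qstar τ I cF i) = I i := by
  rw [upsilon_dot]
  have h1 : ∀ j : Fin m,
      (∑ k ∈ Finset.Ici j, pstar I i k) * (I j * qstar τ I cF i j)
        = I i * qstar τ I cF i j := by
    intro j
    by_cases h : i ≤ j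
    · rw [pstar_colsum I hIpos i j, if_pos h, ← mul_assoc, div_mul_cancel₀ _ (hIpos j).ne']
    · simp [qstar_zero_of_lt τ I cF (not_le.1 h)]
  rw [Finset.sum_congr rfl fun j _ => h1 j, ← Finset.mul_sum, qstar_sum_one, mul_one]

lemma omega_value_le {m : ℕ} (τ I : Fin m → ℝ) (cF : ℝ) (hcF : 0 < cF)
    (hτpos : ∀ j, 0 < τ j) (hτmono : StrictMono τ) (hIpos : ∀ j, 0 < I j) (i : Fin m)
    (hQp : (i:ℕ) = 0 ∨ Qmass τ I cF (prevF i) < 0) (k : Fin m) :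
    I i * Qmass τ I cF i + cF / τ i ≤ (OmegaS τ cF I *ᵥ qstar τ I cF i) k := by
  rcases le_or_gt i k with h | h
  · rw [omega_mulVec_high τ I cF hIpos i k h]
  · rw [omega_mulVec_low τ I cF i k h]
    have hki : (k:ℕ) < (i:ℕ) := h
    have hi0 : (i:ℕ) ≠ 0 := by omega
    have hQprev : Qmass τ I cF (prevF i) < 0 := hQp.resolve_left hi0
    rw [Qmass_prev τ I cF i hi0] at hQprev
    have h1 : I i * Qmass τ I cF i < cF * (1 / τ (prevF i) - 1 / τ i) := by
      have h1a : Qmass τ I cF i < cF / I i * (1 / τ (prevF i) - 1 / τ i) := by linarith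
      have h1b := mul_lt_mul_of_pos_left h1a (hIpos i)
      have h1c : I i * (cF / I i * (1 / τ (prevF i) - 1 / τ i))
          = cF * (1 / τ (prevF i) - 1 / τ i) := by
        rw [div_mul_eq_mul_div, ← mul_div_assoc, mul_comm (I i), mul_div_assoc,
          div_self (hIpos i).ne', mul_one]
      linarith
    have h2 : cF / τ (prevF i) ≤ cF / τ k := by
      apply div_le_div_of_nonneg_left hcF.le (hτpos k)
      apply hτmono.monotone
      rw [Fin.le_def]
      show (k:ℕ) ≤ (i:ℕ) - 1
      omega
    have h3 : cF * (1 / τ (prevF i) - 1 / τ i) + cF / τ i = cF / τ (prevF i) := by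
      rw [mul_sub, mul_one_div, mul_one_div]; ring
    linarith

lemma defender_ineq {m : ℕ} (τ I : Fin m → ℝ) (cF : ℝ) (hcF : 0 < cF)
    (hτpos : ∀ j, 0 < τ j) (hτmono : StrictMono τ) (hIpos : ∀ j, 0 < I j)
    (hImono : StrictMono I) (i : Fin m)
    (hQp : (i:ℕ) = 0 ∨ Qmass τ I cF (prevF i) < 0) (p : Fin m → ℝ) (hp : IsProbVec p) :
    pstar I i ⬝ᵥ (OmegaS τ cF I *ᵥ qstar τ I cF i)
      ≤ p ⬝ᵥ (OmegaS τ cF I *ᵥ qstar τ I cF i) := by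
  set V : ℝ := I i * Qmass τ I cF i + cF / τ i with hV
  have hstar : pstar I i ⬝ᵥ (OmegaS τ cF I *ᵥ qstar τ I cF i) = V := by
    unfold dotProduct
    rw [Finset.sum_congr rfl (fun k _ => show pstar I i k * _ = pstar I i k * V by
      rcases le_or_gt i k with h | h
      · rw [omega_mulVec_high τ I cF hIpos i k h]
      · rw [pstar_zero_of_lt I h, zero_mul, zero_mul])]
    rw [← Finset.sum_mul, (pstar_probvec I hIpos hImono i).2, one_mul]
  rw [hstar]
  calc V = (∑ k, p k) * V := by rw [hp.2, one_mul]
    _ = ∑ k, p k * V := by rw [Finset.sum_mul]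
    _ ≤ ∑ k, p k * (OmegaS τ cF I *ᵥ qstar τ I cF i) k := by
        refine Finset.sum_le_sum fun k _ => ?_
        exact mul_le_mul_of_nonneg_left
          (omega_value_le τ I cF hcF hτpos hτmono hIpos i hQp k) (hp.1 k)
    _ = p ⬝ᵥ (OmegaS τ cF I *ᵥ qstar τ I cF i) := rfl

lemma pstar_lt_one {m : ℕ} (I : Fin m → ℝ) (hIpos : ∀ j, 0 < I j) (hImono : StrictMono I)
    (i : Fin m) (hi : (i:ℕ) < m - 1) (j : Fin m) : pstar I i j < 1 := by
  unfold pstar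
  by_cases h1 : j < i
  · rw [if_pos h1]; norm_num
  rw [if_neg h1]
  have hij : (i:ℕ) ≤ (j:ℕ) := not_lt.1 h1
  by_cases h2 : (j:ℕ) + 1 < m
  · rw [dif_pos h2]
    have hpos : 0 < I i / I ⟨(j:ℕ)+1, h2⟩ := div_pos (hIpos i) (hIpos _)
    by_cases h3 : j = i
    · rw [if_pos h3]; linarith
    · rw [if_neg h3]
      have hle : I i ≤ I j := hImono.monotone hij
      have := div_le_one_of_le₀ hle (hIpos j).le
      linarith
  · rw [dif_neg h2]
    rw [div_lt_one (hIpos j)]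
    apply hImono
    rw [Fin.lt_def]
    have := j.isLt
    omega

/-- Theorem 2 (closed-form Nash equilibrium for a single attacker type):
`(c_F/I_m)(1/τ_{m-1} - 1/τ_m) ≤ 1` if, and only if, there is a smallest index `i*` with
`Q(i*) ∈ [0,1)`, and for this `i*` the pair `(pstar(i*), qstar(i*))` is a mixed-strategy Nash
equilibrium of the matrix game `(Ω, Υ)` and `pstar(i*)` is a moving target defense. -/
theorem closed_form_nash_equilibrium (m : ℕ) (hm : 2 ≤ m)
    (τ : Fin m → ℝ) (hτmono : StrictMono τ) (hτ1 : 1 ≤ τ ⟨0, by omega⟩)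
    (cF : ℝ) (hcF : 0 < cF)
    (I : Fin m → ℝ) (hI0 : 0 < I ⟨0, by omega⟩) (hImono : StrictMono I) :
    (cF / I ⟨m - 1, by omega⟩ *
        (1 / τ (prevF ⟨m - 1, by omega⟩) - 1 / τ ⟨m - 1, by omega⟩) ≤ 1) ↔
    (∃ istar : Fin m, (istar : ℕ) < m - 1 ∧
      (0 ≤ Qmass τ I cF istar ∧ Qmass τ I cF istar < 1) ∧
      (∀ j : Fin m, (j : ℕ) < m - 1 → (0 ≤ Qmass τ I cF j ∧ Qmass τ I cF j < 1) →
        istar ≤ j) ∧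
      IsProbVec (pstar I istar) ∧ IsProbVec (qstar τ I cF istar) ∧
      (∀ p : Fin m → ℝ, IsProbVec p →
        pstar I istar ⬝ᵥ (OmegaS τ cF I *ᵥ qstar τ I cF istar) ≤
          p ⬝ᵥ (OmegaS τ cF I *ᵥ qstar τ I cF istar)) ∧
      (∀ q : Fin m → ℝ, IsProbVec q →
        pstar I istar ⬝ᵥ (UpsilonS I *ᵥ q) ≤
          pstar I istar ⬝ᵥ (UpsilonS I *ᵥ qstar τ I cF istar)) ∧
      (∀ j : Fin m, pstar I istar j < 1)) := by
  classical
  have hIpos : ∀ j, 0 < I j := by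
    intro j
    refine lt_of_lt_of_le hI0 (hImono.monotone ?_)
    rw [Fin.le_def]
    exact Nat.zero_le _
  have hτpos : ∀ j, 0 < τ j := by
    intro j
    have h := hτmono.monotone (show (⟨0, by omega⟩ : Fin m) ≤ j by
      rw [Fin.le_def]; exact Nat.zero_le _)
    linarith
  constructor
  · intro ha
    set S : Finset (Fin m) :=
      Finset.univ.filter (fun j => (j:ℕ) < m - 1 ∧ 0 ≤ Qmass τ I cF j) with hS
    have hj0mem : (⟨m-2, by omega⟩ : Fin m) ∈ S := by
      rw [hS, Finset.mem_filter]
      refine ⟨Finset.mem_univ _, show m - 2 < m - 1 by omega, ?_⟩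
      have hIoi : Finset.Ioi (⟨m-2, by omega⟩ : Fin m)
          = {(⟨m-1, by omega⟩ : Fin m)} := by
        ext l
        simp only [Finset.mem_Ioi, Finset.mem_singleton, Fin.lt_def, Fin.ext_iff]
        have := l.isLt
        show m - 2 < (l:ℕ) ↔ (l:ℕ) = m - 1
        omega
      rw [Qmass, hIoi, Finset.sum_singleton]
      linarith
    have hSne : S.Nonempty := ⟨_, hj0mem⟩
    set i := S.min' hSne with hi
    obtain ⟨-, hi1, hQ0⟩ := Finset.mem_filter.1 (S.min'_mem hSne)
    have hQ1 : Qmass τ I cF i < 1 := by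
      rw [Qmass]
      have hpos : 0 < ∑ l ∈ Finset.Ioi i, cF / I l * (1 / τ (prevF l) - 1 / τ l) := by
        refine Finset.sum_pos'
          (fun l _ => rterm_nonneg τ I cF hcF.le hτpos hτmono.monotone hIpos l) ?_
        refine ⟨⟨m-1, by omega⟩, ?_,
          rterm_pos τ I cF hcF hτpos hτmono hIpos _ (show m - 1 ≠ 0 by omega)⟩
        rw [Finset.mem_Ioi, Fin.lt_def]
        show (i:ℕ) < m - 1
        exact hi1
      linarith
    have hQp : (i:ℕ) = 0 ∨ Qmass τ I cF (prevF i) < 0 := by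
      by_cases h0 : (i:ℕ) = 0
      · exact Or.inl h0
      · right
        by_contra hc
        push_neg at hc
        have hmem : prevF i ∈ S := by
          refine Finset.mem_filter.2 ⟨Finset.mem_univ _, ?_, hc⟩
          show (i:ℕ) - 1 < m - 1
          omega
        have hle := S.min'_le _ hmem
        rw [← hi, Fin.le_def] at hle
        have : ((prevF i : Fin m) : ℕ) = (i:ℕ) - 1 := rfl
        omega
    refine ⟨i, hi1, ⟨hQ0, hQ1⟩, ?_, pstar_probvec I hIpos hImono i,
      ⟨qstar_nonneg τ I cF hcF.le hτpos hτmono.monotone hIpos i hQ0,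
        qstar_sum_one τ I cF i⟩,
      fun p hp => defender_ineq τ I cF hcF hτpos hτmono hIpos hImono i hQp p hp,
      fun q hq => ?_, pstar_lt_one I hIpos hImono i hi1⟩
    · intro j hj hQj
      exact S.min'_le _ (Finset.mem_filter.2 ⟨Finset.mem_univ _, hj, hQj.1⟩)
    · rw [upsilon_dot_qstar τ I cF hIpos i]
      exact upsilon_dot_le I hIpos hImono i q hq
  · rintro ⟨i, hi1, ⟨hQ0, -⟩, -⟩
    rw [Qmass] at hQ0
    have hmem : (⟨m-1, by omega⟩ : Fin m) ∈ Finset.Ioi i := by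
      rw [Finset.mem_Ioi, Fin.lt_def]
      show (i:ℕ) < m - 1
      exact hi1
    have hsingle := Finset.single_le_sum
      (f := fun l => cF / I l * (1 / τ (prevF l) - 1 / τ l))
      (fun l _ => rterm_nonneg τ I cF hcF.le hτpos hτmono.monotone hIpos l) hmem
    linarith
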